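/- arXiv:2402.17696 — 6 statements merged into one kernel-verified Lean document; each statement's English description precedes it below -/
import Mathlib

section
/- Let U and D be complex Hilbert spaces, S : U → D a bounded linear operator, σ > 0, d ∈ D with d ≠ 0, and let u_σ be the Tikhonov minimizer of u ↦ ‖Su − d‖² + σ‖u‖². If ‖Su_σ − d‖ ≤ (1/2)‖d‖, then σ ≤ 2‖S‖². -/
/-! For a minimiser `u` of the Tikhonov functional `J`, the map `t ↦ J (t • u)` is a real quadratic
minimised at `t = 1`. Its vanishing derivative gives `‖S u‖² + σ‖u‖² = re ⟪S u, d⟫`, i.e.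
`σ‖u‖² = re ⟪S u, d - S u⟫ ≤ ‖S u‖ ‖d - S u‖`. By the triangle inequality a residual of at most
`‖d‖ / 2` is at most `‖S u‖`, so `σ‖u‖² ≤ ‖S u‖² ≤ ‖S‖²‖u‖²`, and `u ≠ 0` because `S u ≠ 0`.
Hence in fact `σ ≤ ‖S‖²`. -/

open RCLike
open scoped InnerProductSpace

theorem two_mul_eq_of_forall_le {a b c : ℝ}
    (h : ∀ t, a - b + c ≤ a * t ^ 2 - b * t + c) : 2 * a = b := by
  have hdisc := discrim_le_zero (a := a) (b := 2 * a - b) (c := 0) fun s => by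
    nlinarith [h (1 + s)]
  rw [discrim, mul_zero, sub_zero] at hdisc
  exact sub_eq_zero.1 <| pow_eq_zero_iff two_ne_zero |>.1 (le_antisymm hdisc (sq_nonneg _))

section Tikhonov

variable {𝕜 U D : Type*} [RCLike 𝕜]
  [NormedAddCommGroup U] [InnerProductSpace 𝕜 U] [NormedAddCommGroup D] [InnerProductSpace 𝕜 D]

def tikhonovFunctional (S : U →L[𝕜] D) (d : D) (σ : ℝ) (v : U) : ℝ :=
  ‖S v - d‖ ^ 2 + σ * ‖v‖ ^ 2

variable (S : U →L[𝕜] D) (d : D) (σ : ℝ) (u : U)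

theorem tikhonovFunctional_ofReal_smul (t : ℝ) :
    tikhonovFunctional S d σ ((t : 𝕜) • u) =
      (‖S u‖ ^ 2 + σ * ‖u‖ ^ 2) * t ^ 2 - 2 * re ⟪S u, d⟫_𝕜 * t + ‖d‖ ^ 2 := by
  rw [tikhonovFunctional, map_smul, @norm_sub_sq 𝕜, inner_smul_left, conj_ofReal, re_ofReal_mul,
    norm_smul, norm_smul, norm_ofReal, mul_pow, mul_pow, sq_abs]
  ring

theorem tikhonov_norm_sq_add_mul_norm_sq_eq_re_inner
    (h : ∀ v, tikhonovFunctional S d σ u ≤ tikhonovFunctional S d σ v) :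
    ‖S u‖ ^ 2 + σ * ‖u‖ ^ 2 = re ⟪S u, d⟫_𝕜 := by
  have hJu := tikhonovFunctional_ofReal_smul S d σ u 1
  rw [ofReal_one, one_smul, one_pow, mul_one, mul_one] at hJu
  have hquad := two_mul_eq_of_forall_le (c := ‖d‖ ^ 2) fun t => by
    simpa only [hJu, tikhonovFunctional_ofReal_smul] using h ((t : 𝕜) • u)
  linarith

theorem tikhonov_mul_norm_sq_le_norm_mul_norm_sub
    (h : ∀ v, tikhonovFunctional S d σ u ≤ tikhonovFunctional S d σ v) :
    σ * ‖u‖ ^ 2 ≤ ‖S u‖ * ‖d - S u‖ := by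
  have hcrit := tikhonov_norm_sq_add_mul_norm_sq_eq_re_inner S d σ u h
  calc σ * ‖u‖ ^ 2 = re ⟪S u, d - S u⟫_𝕜 := by
        rw [inner_sub_right, map_sub, inner_self_eq_norm_sq]; linarith
    _ ≤ ‖S u‖ * ‖d - S u‖ := re_inner_le_norm _ _

theorem tikhonov_le_opNorm_sq
    (h : ∀ v, tikhonovFunctional S d σ u ≤ tikhonovFunctional S d σ v)
    (hres : ‖S u - d‖ ≤ ‖S u‖) (hSu : S u ≠ 0) : σ ≤ ‖S‖ ^ 2 := by
  have hu : 0 < ‖u‖ := norm_pos_iff.2 fun hu => hSu (by rw [hu, map_zero])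
  have hSu_le : ‖S u‖ ≤ ‖S‖ * ‖u‖ := S.le_opNorm u
  have : σ * ‖u‖ ^ 2 ≤ (‖S‖ * ‖u‖) ^ 2 := calc
    σ * ‖u‖ ^ 2 ≤ ‖S u‖ * ‖d - S u‖ := tikhonov_mul_norm_sq_le_norm_mul_norm_sub S d σ u h
    _ ≤ ‖S u‖ * ‖S u‖ := by rw [norm_sub_rev]; gcongr
    _ ≤ (‖S‖ * ‖u‖) ^ 2 := by rw [← sq]; gcongr
  rw [mul_pow] at this
  exact le_of_mul_le_mul_right this (by positivity)

end Tikhonov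

theorem tikhonov_small_residual_forces_small_regularization_general
    {U D : Type*}
    [NormedAddCommGroup U] [InnerProductSpace ℂ U]
    [NormedAddCommGroup D] [InnerProductSpace ℂ D]
    (S : U →L[ℂ] D) (σ : ℝ) (d : D) (hd : d ≠ 0)
    (uσ : U)
    (huσ : ∀ v : U, ‖S uσ - d‖ ^ 2 + σ * ‖uσ‖ ^ 2 ≤ ‖S v - d‖ ^ 2 + σ * ‖v‖ ^ 2)
    (hres : ‖S uσ - d‖ ≤ (1 / 2) * ‖d‖) :
    σ ≤ 2 * ‖S‖ ^ 2 := by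
  have hd_le : ‖d‖ ≤ ‖S uσ‖ + ‖S uσ - d‖ := by
    simpa only [sub_sub_cancel] using norm_sub_le (S uσ) (S uσ - d)
  have hd_pos : 0 < ‖d‖ := norm_pos_iff.2 hd
  have hSu : S uσ ≠ 0 := fun h => by
    rw [h, zero_sub, norm_neg] at hres; linarith
  have hσ := tikhonov_le_opNorm_sq S d σ uσ huσ (by linarith) hSu
  linarith [sq_nonneg ‖S‖]

/-- Let `U` and `D` be complex Hilbert spaces, `S : U → D` a bounded linear
operator, `σ > 0`, `d ∈ D` with `d ≠ 0`, and let `u_σ` be the Tikhonov minimizer of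
`u ↦ ‖S u − d‖² + σ‖u‖²`. If `‖S u_σ − d‖ ≤ (1/2)‖d‖`, then `σ ≤ 2‖S‖²`. -/
theorem tikhonov_small_residual_forces_small_regularization
    {U D : Type*}
    [NormedAddCommGroup U] [InnerProductSpace ℂ U] [CompleteSpace U]
    [NormedAddCommGroup D] [InnerProductSpace ℂ D] [CompleteSpace D]
    (S : U →L[ℂ] D) (σ : ℝ) (hσ : 0 < σ) (d : D) (hd : d ≠ 0)
    (uσ : U)
    (huσ : ∀ v : U, ‖S uσ - d‖ ^ 2 + σ * ‖uσ‖ ^ 2 ≤ ‖S v - d‖ ^ 2 + σ * ‖v‖ ^ 2)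
    (hres : ‖S uσ - d‖ ≤ (1 / 2) * ‖d‖) :
    σ ≤ 2 * ‖S‖ ^ 2 :=
  tikhonov_small_residual_forces_small_regularization_general S σ d hd uσ huσ hres
end

section
/- Let U and D be complex Hilbert spaces, σ > 0, and let S⁰, S¹ : U → D be bounded linear operators; set S = S⁰ + S¹. Let d, d⁰ ∈ D, and let u_σ and u⁰_σ be the Tikhonov minimizers of u ↦ ‖Su − d‖² + σ‖u‖² and u ↦ ‖S⁰u − d⁰‖² + σ‖u‖², respectively. Then the identity ((S⁰)*S⁰ + σI)(u_σ − u⁰_σ) = (S¹)*d + (S⁰)*(d − d⁰) − ((S⁰)*S¹ + (S¹)*S⁰ + (S¹)*S¹)u_σ holds, and consequently ‖u_σ − u⁰_σ‖ ≤ σ⁻¹ ( ‖S¹‖‖d‖ + ‖S⁰‖‖d − d⁰‖ + (2‖S⁰‖‖S¹‖ + ‖S¹‖²)‖u_σ‖ ). -/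
/-!
A Tikhonov minimizer `u` satisfies the normal equation `S*(S u - d) + σ u = 0`: along the line
`u + t g` through the gradient `g = S*(S u - d) + σ u` the functional is a quadratic in `t` with
linear coefficient `2‖g‖²`, and a quadratic that is nonnegative everywhere with no constant term
has vanishing linear coefficient. Subtracting the normal equations of the two problems gives the
identity; the bound follows from `re ⟪(S*S + σ) w, w⟫ ≥ σ ‖w‖²`.
-/

open ContinuousLinearMap
open scoped InnerProductSpace

section
variable {𝕜 E F : Type*} [RCLike 𝕜]
  [NormedAddCommGroup E] [InnerProductSpace 𝕜 E] [NormedAddCommGroup F] [InnerProductSpace 𝕜 F]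

open RCLike

def tikhonov (S : E →L[𝕜] F) (d : F) (σ : ℝ) (u : E) : ℝ :=
  ‖S u - d‖ ^ 2 + σ * ‖u‖ ^ 2

theorem tikhonov_zero_smul (S : E →L[𝕜] F) (σ t : ℝ) (v : E) :
    tikhonov S 0 σ ((t : 𝕜) • v) = t ^ 2 * tikhonov S 0 σ v := by
  simp only [tikhonov, sub_zero, map_smul, norm_smul, norm_ofReal, mul_pow, sq_abs]
  ring

variable [CompleteSpace E] [CompleteSpace F]

theorem tikhonov_add (S : E →L[𝕜] F) (d : F) (σ : ℝ) (u v : E) :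
    tikhonov S d σ (u + v) = tikhonov S d σ u +
      2 * re ⟪adjoint S (S u - d) + (σ : 𝕜) • u, v⟫_𝕜 + tikhonov S 0 σ v := by
  unfold tikhonov
  rw [map_add, show S u + S v - d = (S u - d) + S v by abel]
  simp only [sub_zero, norm_add_sq (𝕜 := 𝕜), inner_add_left, adjoint_inner_left,
    inner_smul_left, conj_ofReal, map_add, re_ofReal_mul]
  ring

theorem adjoint_apply_sub_add_smul_eq_zero_of_tikhonov_le {S : E →L[𝕜] F} {d : F} {σ : ℝ}
    {u : E} (h : ∀ v, tikhonov S d σ u ≤ tikhonov S d σ v) :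
    adjoint S (S u - d) + (σ : 𝕜) • u = 0 := by
  set g := adjoint S (S u - d) + (σ : 𝕜) • u
  have hquad : ∀ t : ℝ, 0 ≤ tikhonov S 0 σ g * (t * t) + 2 * ‖g‖ ^ 2 * t + 0 := by
    intro t
    have := h (u + (t : 𝕜) • g)
    rw [tikhonov_add, tikhonov_zero_smul, inner_smul_right, inner_self_eq_norm_sq_to_K,
      ← ofReal_pow, re_ofReal_mul, ofReal_re] at this
    linarith
  have hdisc : (2 * ‖g‖ ^ 2) ^ 2 = 0 :=
    le_antisymm (by simpa [discrim] using discrim_le_zero hquad) (sq_nonneg _)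
  simpa using hdisc

theorem norm_le_inv_mul_norm_adjoint_apply_add_smul (S : E →L[𝕜] F) {σ : ℝ} (hσ : 0 < σ)
    (w : E) :
    ‖w‖ ≤ σ⁻¹ * ‖adjoint S (S w) + (σ : 𝕜) • w‖ := by
  set r := adjoint S (S w) + (σ : 𝕜) • w
  have hre : re ⟪r, w⟫_𝕜 = ‖S w‖ ^ 2 + σ * ‖w‖ ^ 2 := by
    rw [inner_add_left, adjoint_inner_left, inner_smul_left, conj_ofReal, map_add,
      re_ofReal_mul, inner_self_eq_norm_sq (𝕜 := 𝕜), inner_self_eq_norm_sq (𝕜 := 𝕜)]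
  have hσw : σ * ‖w‖ ^ 2 ≤ ‖r‖ * ‖w‖ := by
    nlinarith [re_inner_le_norm (𝕜 := 𝕜) r w]
  rw [le_inv_mul_iff₀ hσ]
  rcases (norm_nonneg w).eq_or_lt with hw | hw
  · simp [← hw]
  · nlinarith

theorem norm_adjoint_apply_le (A : E →L[𝕜] F) (x : F) : ‖adjoint A x‖ ≤ ‖A‖ * ‖x‖ := by
  simpa only [LinearIsometryEquiv.norm_map] using (adjoint A).le_opNorm x

theorem norm_adjoint_apply_apply_le (A B : E →L[𝕜] F) (u : E) :
    ‖adjoint A (B u)‖ ≤ ‖A‖ * ‖B‖ * ‖u‖ := by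
  rw [mul_assoc]
  exact (norm_adjoint_apply_le A _).trans (by gcongr; exact B.le_opNorm u)

end

/-- Let `U`, `D` be complex Hilbert spaces, `σ > 0`, `S⁰, S¹ : U → D` bounded,
`S = S⁰ + S¹`, `d, d⁰ ∈ D`, and let `u_σ`, `u⁰_σ` be the Tikhonov minimizers of
`u ↦ ‖S u − d‖² + σ‖u‖²` and `u ↦ ‖S⁰ u − d⁰‖² + σ‖u‖²`. Then
`((S⁰)*S⁰ + σI)(u_σ − u⁰_σ) = (S¹)*d + (S⁰)*(d − d⁰) − ((S⁰)*S¹ + (S¹)*S⁰ + (S¹)*S¹) u_σ`,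
and consequently
`‖u_σ − u⁰_σ‖ ≤ σ⁻¹ (‖S¹‖‖d‖ + ‖S⁰‖‖d − d⁰‖ + (2‖S⁰‖‖S¹‖ + ‖S¹‖²)‖u_σ‖)`. -/
theorem tikhonov_perturbation_identity_and_bound
    {U D : Type*}
    [NormedAddCommGroup U] [InnerProductSpace ℂ U] [CompleteSpace U]
    [NormedAddCommGroup D] [InnerProductSpace ℂ D] [CompleteSpace D]
    (S0 S1 : U →L[ℂ] D) (σ : ℝ) (hσ : 0 < σ) (d d0 : D)
    (uσ u0σ : U)
    (huσ : ∀ v : U, ‖(S0 + S1) uσ - d‖ ^ 2 + σ * ‖uσ‖ ^ 2 ≤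
      ‖(S0 + S1) v - d‖ ^ 2 + σ * ‖v‖ ^ 2)
    (hu0σ : ∀ v : U, ‖S0 u0σ - d0‖ ^ 2 + σ * ‖u0σ‖ ^ 2 ≤
      ‖S0 v - d0‖ ^ 2 + σ * ‖v‖ ^ 2) :
    (adjoint S0) (S0 (uσ - u0σ)) + σ • (uσ - u0σ) =
      (adjoint S1) d + (adjoint S0) (d - d0) -
        ((adjoint S0) (S1 uσ) + (adjoint S1) (S0 uσ) + (adjoint S1) (S1 uσ)) ∧
    ‖uσ - u0σ‖ ≤ σ⁻¹ *
      (‖S1‖ * ‖d‖ + ‖S0‖ * ‖d - d0‖ + (2 * ‖S0‖ * ‖S1‖ + ‖S1‖ ^ 2) * ‖uσ‖) := by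
  have hN := adjoint_apply_sub_add_smul_eq_zero_of_tikhonov_le (S := S0 + S1) huσ
  have hN0 := adjoint_apply_sub_add_smul_eq_zero_of_tikhonov_le (S := S0) hu0σ
  simp only [map_add, add_apply, map_sub] at hN hN0
  have hid : (adjoint S0) (S0 (uσ - u0σ)) + σ • (uσ - u0σ) =
      (adjoint S1) d + (adjoint S0) (d - d0) -
        ((adjoint S0) (S1 uσ) + (adjoint S1) (S0 uσ) + (adjoint S1) (S1 uσ)) := by
    simp only [map_sub, smul_sub]
    linear_combination (norm := module) hN - hN0
  refine ⟨hid, ?_⟩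
  calc ‖uσ - u0σ‖ ≤ σ⁻¹ * ‖adjoint S0 (S0 (uσ - u0σ)) + (σ : ℂ) • (uσ - u0σ)‖ :=
        norm_le_inv_mul_norm_adjoint_apply_add_smul S0 hσ _
    _ = σ⁻¹ * ‖(adjoint S1) d + (adjoint S0) (d - d0) -
          ((adjoint S0) (S1 uσ) + (adjoint S1) (S0 uσ) + (adjoint S1) (S1 uσ))‖ := by
        rw [Complex.coe_smul, hid]
    _ ≤ σ⁻¹ * (‖S1‖ * ‖d‖ + ‖S0‖ * ‖d - d0‖ +
          (‖S0‖ * ‖S1‖ * ‖uσ‖ + ‖S1‖ * ‖S0‖ * ‖uσ‖ + ‖S1‖ * ‖S1‖ * ‖uσ‖)) := by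
        gcongr
        refine (norm_sub_le _ _).trans
          (add_le_add ((norm_add_le _ _).trans ?_) (norm_add₃_le.trans ?_))
        · gcongr <;> apply norm_adjoint_apply_le
        · gcongr <;> apply norm_adjoint_apply_apply_le
    _ = _ := by ring
end

section
/- Let w be a nonzero real-valued Schwartz function on ℝ, let μ > 0, and for λ > 0 define w_λ(t) = λ^{−1/2} w(t/λ) and g_λ = 𝓕⁻¹( |𝓕w_λ|² / (|𝓕w_λ|² + λμ) ). Then g_λ(t) = λ^{−1} g_1(t/λ) for almost every t, and consequently ‖g_λ‖²_{L²} = λ^{−1}‖g_1‖²_{L²}, ‖t·g_λ(t)‖²_{L²} = λ‖t·g_1(t)‖²_{L²}, and the pulse width satisfies l(g_λ) = λ·l(g_1). -/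
open MeasureTheory

/-- The scaled wavelet `w_λ(t) = λ^{−1/2} w(t/λ)`. -/
noncomputable def wavScale (w : ℝ → ℂ) (l : ℝ) : ℝ → ℂ :=
  fun t => ((l ^ (-(1 / 2) : ℝ) : ℝ) : ℂ) * w (t / l)

/-- `g_λ = 𝓕⁻¹( |𝓕w_λ|² / (|𝓕w_λ|² + λμ) )`, defined via the inverse Fourier integral. -/
noncomputable def gFilter (w : ℝ → ℂ) (μ : ℝ) (l : ℝ) : ℝ → ℂ :=
  FourierTransformInv.fourierInv (fun ξ =>
    ((‖FourierTransform.fourier (wavScale w l) ξ‖ ^ 2 /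
        (‖FourierTransform.fourier (wavScale w l) ξ‖ ^ 2 + l * μ) : ℝ) : ℂ))

/-!
Dilating `w` by `λ` dilates `𝓕w` by `1/λ` and multiplies `|𝓕w|²` by `λ`, so the Tikhonov
multiplier of `g_λ` (whose regularisation weight `λμ` carries the same factor `λ`) is the
multiplier of `g₁` dilated by `1/λ`. The inverse Fourier transform turns this into
`g_λ(t) = λ⁻¹ g₁(t/λ)` for every `t`, and the norm identities follow by the change of variables
`t ↦ t/λ` in the `L²` integrals.
-/

open FourierTransform

namespace Real

variable {E : Type*} [NormedAddCommGroup E] [NormedSpace ℂ E]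

theorem fourier_comp_mul_left (F : ℝ → E) {c : ℝ} (hc : c ≠ 0) (ξ : ℝ) :
    𝓕 (fun v => F (c * v)) ξ = |c⁻¹| • 𝓕 F (c⁻¹ * ξ) := by
  rw [fourier_real_eq, fourier_real_eq,
    ← Measure.integral_comp_mul_left (fun v => 𝐞 (-(v * (c⁻¹ * ξ))) • F v) c]
  congr with v
  rw [mul_mul_mul_comm, mul_inv_cancel₀ hc, one_mul]

theorem fourierInv_comp_mul_left (F : ℝ → E) {c : ℝ} (hc : c ≠ 0) (t : ℝ) :
    𝓕⁻ (fun ξ => F (c * ξ)) t = |c⁻¹| • 𝓕⁻ F (c⁻¹ * t) := by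
  rw [fourierInv_eq_fourier_neg, fourierInv_eq_fourier_neg, fourier_comp_mul_left F hc, mul_neg]

theorem fourier_const_smul (a : ℂ) (F : ℝ → E) : 𝓕 (a • F) = a • 𝓕 F :=
  VectorFourier.fourierIntegral_const_smul _ _ _ F a

end Real

theorem eLpNorm_comp_mul_left {E : Type*} [NormedAddCommGroup E] (f : ℝ → E) {c : ℝ}
    (hc : c ≠ 0) {p : ENNReal} (hp : p ≠ ⊤) :
    eLpNorm (fun t => f (c * t)) p volume =
      ENNReal.ofReal |c⁻¹| ^ (1 / p).toReal * eLpNorm f p volume := by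
  rw [← Function.comp_def, ← (measurableEmbedding_mulLeft₀ hc).eLpNorm_map_measure,
    Real.map_volume_mul_left hc, eLpNorm_smul_measure_of_ne_top hp, smul_eq_mul]

theorem wavScale_one (w : ℝ → ℂ) : wavScale w 1 = w := by
  ext t
  simp [wavScale]

theorem fourier_wavScale (w : ℝ → ℂ) {l : ℝ} (hl : 0 < l) (ξ : ℝ) :
    𝓕 (wavScale w l) ξ = (√l : ℂ) * 𝓕 w (l * ξ) := by
  have hscale : wavScale w l = ((√l)⁻¹ : ℂ) • fun t => w (l⁻¹ * t) := by
    ext t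
    simp [wavScale, Real.rpow_neg hl.le, Real.sqrt_eq_rpow, div_eq_inv_mul]
  rw [hscale, Real.fourier_const_smul, Pi.smul_apply,
    Real.fourier_comp_mul_left w (inv_ne_zero hl.ne'), inv_inv, abs_of_pos hl, Complex.real_smul,
    smul_eq_mul, ← mul_assoc, ← Complex.ofReal_inv, ← Complex.ofReal_mul, inv_mul_eq_div,
    Real.div_sqrt]

theorem norm_fourier_wavScale_sq (w : ℝ → ℂ) {l : ℝ} (hl : 0 < l) (ξ : ℝ) :
    ‖𝓕 (wavScale w l) ξ‖ ^ 2 = l * ‖𝓕 w (l * ξ)‖ ^ 2 := by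
  rw [fourier_wavScale w hl, norm_mul, mul_pow, Complex.norm_real, Real.norm_eq_abs, sq_abs,
    Real.sq_sqrt hl.le]

noncomputable def gFilterSymbol (w : ℝ → ℂ) (μ l : ℝ) : ℝ → ℂ := fun ξ =>
  ((‖𝓕 (wavScale w l) ξ‖ ^ 2 / (‖𝓕 (wavScale w l) ξ‖ ^ 2 + l * μ) : ℝ) : ℂ)

theorem gFilterSymbol_apply_eq (w : ℝ → ℂ) (μ : ℝ) {l : ℝ} (hl : 0 < l) (ξ : ℝ) :
    gFilterSymbol w μ l ξ = gFilterSymbol w μ 1 (l * ξ) := by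
  simp only [gFilterSymbol, norm_fourier_wavScale_sq w hl, wavScale_one, one_mul, ← mul_add,
    mul_div_mul_left _ _ hl.ne']

theorem gFilter_apply_eq (w : ℝ → ℂ) (μ : ℝ) {l : ℝ} (hl : 0 < l) (t : ℝ) :
    gFilter w μ l t = ((l⁻¹ : ℝ) : ℂ) * gFilter w μ 1 (t / l) := by
  change 𝓕⁻ (gFilterSymbol w μ l) t = _ * 𝓕⁻ (gFilterSymbol w μ 1) _
  rw [funext (gFilterSymbol_apply_eq w μ hl), Real.fourierInv_comp_mul_left _ hl.ne',
    abs_of_pos (inv_pos.2 hl), Complex.real_smul, inv_mul_eq_div]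

theorem toReal_eLpNorm_two_comp_div {E : Type*} [NormedAddCommGroup E] (f : ℝ → E) {l : ℝ}
    (hl : 0 < l) :
    (eLpNorm (fun t => f (t / l)) 2 volume).toReal = √l * (eLpNorm f 2 volume).toReal := by
  simp_rw [div_eq_inv_mul]
  rw [eLpNorm_comp_mul_left f (inv_ne_zero hl.ne') ENNReal.ofNat_ne_top, ENNReal.toReal_mul,
    ← ENNReal.toReal_rpow, ENNReal.toReal_ofReal (abs_nonneg _), inv_inv, abs_of_pos hl,
    Real.sqrt_eq_rpow]
  norm_num

theorem gFilter_scaling_general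
    (w : SchwartzMap ℝ ℂ) (μ : ℝ) (l : ℝ) (hl : 0 < l) :
    (∀ᵐ t ∂(volume : Measure ℝ),
      gFilter (⇑w) μ l t = ((l⁻¹ : ℝ) : ℂ) * gFilter (⇑w) μ 1 (t / l)) ∧
    (eLpNorm (gFilter (⇑w) μ l) 2 volume).toReal ^ 2 =
      l⁻¹ * (eLpNorm (gFilter (⇑w) μ 1) 2 volume).toReal ^ 2 ∧
    (eLpNorm (fun t : ℝ => (t : ℂ) * gFilter (⇑w) μ l t) 2 volume).toReal ^ 2 =
      l * (eLpNorm (fun t : ℝ => (t : ℂ) * gFilter (⇑w) μ 1 t) 2 volume).toReal ^ 2 ∧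
    (eLpNorm (fun t : ℝ => (t : ℂ) * gFilter (⇑w) μ l t) 2 volume).toReal /
        (eLpNorm (gFilter (⇑w) μ l) 2 volume).toReal =
      l * ((eLpNorm (fun t : ℝ => (t : ℂ) * gFilter (⇑w) μ 1 t) 2 volume).toReal /
        (eLpNorm (gFilter (⇑w) μ 1) 2 volume).toReal) := by
  have hpt := gFilter_apply_eq w μ hl
  have hnorm : (eLpNorm (gFilter w μ l) 2 volume).toReal =
      (√l)⁻¹ * (eLpNorm (gFilter w μ 1) 2 volume).toReal := by
    rw [show gFilter w μ l = ((l⁻¹ : ℝ) : ℂ) • fun t => gFilter w μ 1 (t / l) from funext hpt,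
      eLpNorm_const_smul, ENNReal.toReal_mul, toReal_enorm, toReal_eLpNorm_two_comp_div _ hl,
      Complex.norm_real, Real.norm_of_nonneg (inv_nonneg.2 hl.le), ← mul_assoc, inv_mul_eq_div,
      Real.sqrt_div_self]
  have hmoment : (eLpNorm (fun t : ℝ => (t : ℂ) * gFilter w μ l t) 2 volume).toReal =
      √l * (eLpNorm (fun t : ℝ => (t : ℂ) * gFilter w μ 1 t) 2 volume).toReal := by
    have hdilate : (fun t : ℝ => (t : ℂ) * gFilter w μ l t) =
        fun t => (fun s : ℝ => (s : ℂ) * gFilter w μ 1 s) (t / l) := by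
      ext t
      rw [hpt]
      push_cast
      field_simp
    rw [hdilate]
    exact toReal_eLpNorm_two_comp_div (fun s : ℝ => (s : ℂ) * gFilter w μ 1 s) hl
  refine ⟨.of_forall hpt, ?_, ?_, ?_⟩
  · rw [hnorm, mul_pow, inv_pow, Real.sq_sqrt hl.le]
  · rw [hmoment, mul_pow, Real.sq_sqrt hl.le]
  · rw [hnorm, hmoment, mul_div_mul_comm, div_inv_eq_mul, Real.mul_self_sqrt hl.le]

/-- Let `w` be a nonzero real-valued Schwartz function on `ℝ`, `μ > 0`, and
for `λ > 0` let `w_λ(t) = λ^{−1/2} w(t/λ)` and `g_λ = 𝓕⁻¹(|𝓕w_λ|²/(|𝓕w_λ|² + λμ))`. Then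
`g_λ(t) = λ⁻¹ g₁(t/λ)` for a.e. `t`, hence `‖g_λ‖² = λ⁻¹‖g₁‖²`,
`‖t·g_λ(t)‖² = λ‖t·g₁(t)‖²`, and the pulse width satisfies `l(g_λ) = λ·l(g₁)`. -/
theorem gFilter_scaling
    (w : SchwartzMap ℝ ℂ) (hw_real : ∀ t, (w t).im = 0) (hw0 : w ≠ 0)
    (μ : ℝ) (hμ : 0 < μ) (l : ℝ) (hl : 0 < l) :
    (∀ᵐ t ∂(volume : Measure ℝ),
      gFilter (⇑w) μ l t = ((l⁻¹ : ℝ) : ℂ) * gFilter (⇑w) μ 1 (t / l)) ∧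
    (eLpNorm (gFilter (⇑w) μ l) 2 volume).toReal ^ 2 =
      l⁻¹ * (eLpNorm (gFilter (⇑w) μ 1) 2 volume).toReal ^ 2 ∧
    (eLpNorm (fun t : ℝ => (t : ℂ) * gFilter (⇑w) μ l t) 2 volume).toReal ^ 2 =
      l * (eLpNorm (fun t : ℝ => (t : ℂ) * gFilter (⇑w) μ 1 t) 2 volume).toReal ^ 2 ∧
    (eLpNorm (fun t : ℝ => (t : ℂ) * gFilter (⇑w) μ l t) 2 volume).toReal /
        (eLpNorm (gFilter (⇑w) μ l) 2 volume).toReal =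
      l * ((eLpNorm (fun t : ℝ => (t : ℂ) * gFilter (⇑w) μ 1 t) 2 volume).toReal /
        (eLpNorm (gFilter (⇑w) μ 1) 2 volume).toReal) :=
  gFilter_scaling_general w μ l hl
end

section
/- Let U, V, D be complex Hilbert spaces, S : U → D bounded and coercive with C_*‖u‖ ≤ ‖Su‖ for all u ∈ U, T : U → V bounded, d ∈ D, and for α ≥ 0 let u_α = (S*S + α²T*T)⁻¹S*d. Then u_α = u_0 − α² v_α, where v_α = (S*S + α²T*T)⁻¹ T*T u_0 satisfies the uniform bound ‖v_α‖ ≤ C_*^{−2}‖T‖²‖u_0‖ for all α ≥ 0; in particular ‖u_α − u_0‖ ≤ α² C_*^{−2}‖T‖²‖u_0‖. -/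
/-!
The operator `A = S*S + α² T*T` satisfies `re ⟪A x, x⟫ = ‖S x‖² + α² ‖T x‖² ≥ C_*² ‖x‖²`.
Such a coercive operator is bounded below by `C_*²`, hence injective with closed range, and
its range has trivial orthogonal complement, so it is bijective (Lax–Milgram). Since
`A u_α = S*d = S*S u_0 = A u_0 - α² T*T u_0`, injectivity gives `u_α = u_0 - α² v_α` with
`A v_α = T*T u_0`, and the lower bound gives `‖v_α‖ ≤ C_*⁻² ‖T*T u_0‖ ≤ C_*⁻² ‖T‖² ‖u_0‖`.
-/

open ContinuousLinearMap RCLike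

open scoped InnerProductSpace

section Coercive

variable {𝕜 E : Type*} [RCLike 𝕜] [NormedAddCommGroup E] [InnerProductSpace 𝕜 E]
  {A : E →L[𝕜] E} {c : ℝ}

lemma mul_norm_le_norm_apply_of_coercive (hA : ∀ x, c * ‖x‖ ^ 2 ≤ re ⟪A x, x⟫_𝕜) (x : E) :
    c * ‖x‖ ≤ ‖A x‖ := by
  rcases (norm_nonneg x).eq_or_lt with hx | hx
  · simp [← hx]
  refine le_of_mul_le_mul_right ?_ hx
  calc c * ‖x‖ * ‖x‖ = c * ‖x‖ ^ 2 := by ring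
    _ ≤ re ⟪A x, x⟫_𝕜 := hA x
    _ ≤ ‖A x‖ * ‖x‖ := re_inner_le_norm _ _

lemma norm_le_inv_mul_norm_apply_of_coercive (hc : 0 < c)
    (hA : ∀ x, c * ‖x‖ ^ 2 ≤ re ⟪A x, x⟫_𝕜) (x : E) : ‖x‖ ≤ c⁻¹ * ‖A x‖ := by
  rw [← div_eq_inv_mul, le_div_iff₀' hc]
  exact mul_norm_le_norm_apply_of_coercive hA x

lemma antilipschitzWith_of_coercive (hc : 0 < c) (hA : ∀ x, c * ‖x‖ ^ 2 ≤ re ⟪A x, x⟫_𝕜) :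
    AntilipschitzWith ⟨c⁻¹, (inv_pos.mpr hc).le⟩ A :=
  A.antilipschitz_of_bound (norm_le_inv_mul_norm_apply_of_coercive hc hA)

lemma surjective_of_coercive [CompleteSpace E] (hc : 0 < c)
    (hA : ∀ x, c * ‖x‖ ^ 2 ≤ re ⟪A x, x⟫_𝕜) : Function.Surjective A := by
  have hclosed : IsClosed (A.range : Set E) :=
    (antilipschitzWith_of_coercive hc hA).isClosed_range A.uniformContinuous
  have : CompleteSpace A.range := hclosed.completeSpace_coe
  refine LinearMap.range_eq_top.mp (Submodule.orthogonal_eq_bot_iff.mp ?_)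
  rw [Submodule.eq_bot_iff]
  intro y hy
  have hAy : ⟪A y, y⟫_𝕜 = 0 := (Submodule.mem_orthogonal _ y).mp hy (A y) ⟨y, rfl⟩
  have h := hA y
  rw [hAy, map_zero] at h
  have : ‖y‖ ^ 2 ≤ 0 := nonpos_of_mul_nonpos_right h hc
  simpa using this

end Coercive

section Penalty

variable {𝕜 U V D : Type*} [RCLike 𝕜]
  [NormedAddCommGroup U] [InnerProductSpace 𝕜 U] [CompleteSpace U]
  [NormedAddCommGroup V] [InnerProductSpace 𝕜 V] [CompleteSpace V]
  [NormedAddCommGroup D] [InnerProductSpace 𝕜 D] [CompleteSpace D]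

/-- Normal operator of the least-squares problem `min ‖S x - d‖² + t ‖T x‖²`. -/
noncomputable def penaltyOp (S : U →L[𝕜] D) (T : U →L[𝕜] V) (t : ℝ) : U →L[𝕜] U :=
  adjoint S ∘L S + (t : 𝕜) • (adjoint T ∘L T)

variable (S : U →L[𝕜] D) (T : U →L[𝕜] V)

lemma penaltyOp_apply (t : ℝ) (x : U) :
    penaltyOp S T t x = adjoint S (S x) + (t : 𝕜) • adjoint T (T x) := rfl

lemma re_inner_penaltyOp_self (t : ℝ) (x : U) :
    re ⟪penaltyOp S T t x, x⟫_𝕜 = ‖S x‖ ^ 2 + t * ‖T x‖ ^ 2 := by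
  simp only [penaltyOp_apply, inner_add_left, inner_smul_left, adjoint_inner_left, map_add,
    conj_ofReal, re_ofReal_mul, inner_self_eq_norm_sq]

lemma penaltyOp_coercive {t : ℝ} (ht : 0 ≤ t) {C : ℝ} (hC : 0 ≤ C)
    (hS : ∀ x, C * ‖x‖ ≤ ‖S x‖) (x : U) :
    C ^ 2 * ‖x‖ ^ 2 ≤ re ⟪penaltyOp S T t x, x⟫_𝕜 := by
  rw [re_inner_penaltyOp_self, ← mul_pow]
  exact le_add_of_le_of_nonneg (pow_le_pow_left₀ (by positivity) (hS x) 2) (by positivity)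

lemma norm_adjoint_apply_apply_le_s14 (x : U) : ‖adjoint T (T x)‖ ≤ ‖T‖ ^ 2 * ‖x‖ := by
  simpa only [sq, ← norm_adjoint_comp_self, comp_apply] using (adjoint T ∘L T).le_opNorm x

end Penalty

/-- Let `U, V, D` be complex Hilbert spaces, `S : U → D` bounded and
coercive with `C_*‖u‖ ≤ ‖S u‖`, `T : U → V` bounded, `d ∈ D`, and for `α ≥ 0` let `u_α`
solve `(S*S + α²T*T)u_α = S*d`. Then `u_α = u_0 − α² v_α`, where `v_α` is the unique solution
of `(S*S + α²T*T)v_α = T*T u_0` and satisfies `‖v_α‖ ≤ C_*⁻²‖T‖²‖u_0‖`; in particular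
`‖u_α − u_0‖ ≤ α² C_*⁻²‖T‖²‖u_0‖`. -/
theorem penalty_minimizer_first_order_expansion
    {U V D : Type*}
    [NormedAddCommGroup U] [InnerProductSpace ℂ U] [CompleteSpace U]
    [NormedAddCommGroup V] [InnerProductSpace ℂ V] [CompleteSpace V]
    [NormedAddCommGroup D] [InnerProductSpace ℂ D] [CompleteSpace D]
    (S : U →L[ℂ] D) (T : U →L[ℂ] V) (d : D)
    (Cstar : ℝ) (hCstar : 0 < Cstar) (hcoercive : ∀ x : U, Cstar * ‖x‖ ≤ ‖S x‖)
    (u : ℝ → U)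
    (hu : ∀ α : ℝ, (adjoint S) (S (u α)) + (α ^ 2) • (adjoint T) (T (u α)) =
      (adjoint S) d) :
    ∀ α : ℝ, 0 ≤ α →
      ∃ v : U,
        ((adjoint S) (S v) + (α ^ 2) • (adjoint T) (T v) = (adjoint T) (T (u 0))) ∧
        (∀ v' : U,
          (adjoint S) (S v') + (α ^ 2) • (adjoint T) (T v') = (adjoint T) (T (u 0)) →
          v' = v) ∧
        u α = u 0 - (α ^ 2) • v ∧
        ‖v‖ ≤ Cstar⁻¹ ^ 2 * ‖T‖ ^ 2 * ‖u 0‖ ∧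
        ‖u α - u 0‖ ≤ α ^ 2 * (Cstar⁻¹ ^ 2 * ‖T‖ ^ 2 * ‖u 0‖) := by
  intro α _
  set A := penaltyOp S T (α ^ 2)
  have hA_apply (x : U) : A x = adjoint S (S x) + (α ^ 2) • adjoint T (T x) := by
    rw [penaltyOp_apply, RCLike.real_smul_eq_coe_smul (K := ℂ)]
  have hA := penaltyOp_coercive S T (sq_nonneg α) hCstar.le hcoercive
  have hc : 0 < Cstar ^ 2 := by positivity
  have hinj : Function.Injective A := (antilipschitzWith_of_coercive hc hA).injective
  obtain ⟨v, hv⟩ := surjective_of_coercive hc hA (adjoint T (T (u 0)))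
  simp only [← hA_apply]
  have hexp : u α = u 0 - (α ^ 2) • v := hinj <| by
    have hu0 : adjoint S (S (u 0)) = adjoint S d := by simpa using hu 0
    rw [map_sub, map_smul_of_tower, hv, hA_apply, hA_apply, hu, hu0, add_sub_cancel_right]
  have hbound : ‖v‖ ≤ Cstar⁻¹ ^ 2 * ‖T‖ ^ 2 * ‖u 0‖ := calc
    ‖v‖ ≤ (Cstar ^ 2)⁻¹ * ‖A v‖ := norm_le_inv_mul_norm_apply_of_coercive hc hA v
    _ ≤ Cstar⁻¹ ^ 2 * ‖T‖ ^ 2 * ‖u 0‖ := by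
      rw [hv, inv_pow, mul_assoc]
      gcongr
      exact norm_adjoint_apply_apply_le_s14 T _
  refine ⟨v, hv, fun v' hv' => hinj (hv'.trans hv.symm), hexp, hbound, ?_⟩
  rw [hexp, sub_sub_cancel_left, norm_neg, norm_smul, Real.norm_of_nonneg (sq_nonneg α)]
  gcongr
end

section
/- Let U, V, D be complex Hilbert spaces, S : U → D bounded and coercive with C_*‖u‖ ≤ ‖Su‖ for all u ∈ U, T : U → V bounded, d ∈ D; for α ≥ 0 let u_α = (S*S + α²T*T)⁻¹S*d, J_α(u) = (1/2)(‖Su − d‖² + α²‖Tu‖²), and J̃_α = J_α(u_α). Then there exists a constant C ≥ 0, depending only on ‖S‖, ‖T‖, C_*, and ‖u_0‖, such that for all α ∈ (0, 1], | J̃_α − J̃_0 − (α²/2)‖Tu_0‖² | ≤ C α⁴. -/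
open ContinuousLinearMap
open scoped InnerProductSpace

/-! Write `e = u_α − u_0`. The normal equation at `α = 0` makes `S u_0 − d` orthogonal to the range
of `S`, and subtracting it from the one at `α` gives `⟪S e, S w⟫ = −α² ⟪T u_α, T w⟫` for all `w`.
These two facts turn the defect `J̃_α − J̃_0 − (α²/2)‖T u_0‖²` into exactly
`(α²/2) Re ⟪T e, T u_0⟫`. Taking `w = u_α` gives `‖S u_α‖ ≤ ‖S u_0‖`, and taking `w = e` together
with coercivity gives `C_*² ‖e‖ ≤ α² ‖T‖² ‖u_α‖`; so `‖e‖ = O(α²)` and the defect is `O(α⁴)`. -/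

lemma mul_le_of_mul_sq_le_mul {a b c : ℝ} (ha : 0 ≤ a) (hb : 0 ≤ b) (h : c * a ^ 2 ≤ b * a) :
    c * a ≤ b := by
  rcases ha.eq_or_lt with rfl | ha
  · simpa using hb
  · exact le_of_mul_le_mul_right (by linarith) ha

section NormalEquation

variable {𝕜 U V D : Type*} [RCLike 𝕜]
  [NormedAddCommGroup U] [InnerProductSpace 𝕜 U]
  [NormedAddCommGroup V] [InnerProductSpace 𝕜 V]
  [NormedAddCommGroup D] [InnerProductSpace 𝕜 D]

/-- The weak form of the normal equation `(S*S + β T*T) x = S* d` (with `β = α²`); it needs no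
adjoints, hence no completeness. -/
def SolvesNormalEq (S : U →L[𝕜] D) (T : U →L[𝕜] V) (d : D) (β : ℝ) (x : U) : Prop :=
  ∀ w, ⟪S x - d, S w⟫_𝕜 + (β : 𝕜) * ⟪T x, T w⟫_𝕜 = 0

namespace SolvesNormalEq

theorem of_adjoint [CompleteSpace U] [CompleteSpace V] [CompleteSpace D]
    {S : U →L[𝕜] D} {T : U →L[𝕜] V} {d : D} {β : ℝ} {x : U}
    (h : adjoint S (S x) + (β : 𝕜) • adjoint T (T x) = adjoint S d) :
    SolvesNormalEq S T d β x := by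
  intro w
  have hw := congrArg (fun y => ⟪y, w⟫_𝕜) h
  simp only [inner_add_left, adjoint_inner_left, inner_smul_left, RCLike.conj_ofReal] at hw
  rw [inner_sub_left]
  linear_combination hw

variable {S : U →L[𝕜] D} {T : U →L[𝕜] V} {d : D} {β : ℝ} {x₀ x : U}

theorem inner_apply_sub (h₀ : SolvesNormalEq S T d 0 x₀) (h : SolvesNormalEq S T d β x) (w : U) :
    ⟪S (x - x₀), S w⟫_𝕜 = -((β : 𝕜) * ⟪T x, T w⟫_𝕜) := by
  have h₀w := h₀ w
  have hw := h w
  rw [RCLike.ofReal_zero, zero_mul, add_zero] at h₀w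
  rw [map_sub, ← sub_sub_sub_cancel_right _ _ d, inner_sub_left, h₀w]
  linear_combination hw

theorem sq_norm_apply_sub (h₀ : SolvesNormalEq S T d 0 x₀) (h : SolvesNormalEq S T d β x) :
    ‖S (x - x₀)‖ ^ 2 = -(β * RCLike.re ⟪T x, T (x - x₀)⟫_𝕜) := by
  rw [← inner_self_eq_norm_sq (𝕜 := 𝕜), h₀.inner_apply_sub h, map_neg,
    RCLike.re_ofReal_mul]

theorem sq_norm_add_eq (h₀ : SolvesNormalEq S T d 0 x₀) (h : SolvesNormalEq S T d β x) :
    ‖S x - d‖ ^ 2 + β * ‖T x‖ ^ 2 = ‖S x₀ - d‖ ^ 2 + β * RCLike.re ⟪T x, T x₀⟫_𝕜 := by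
  have hsplit : S x - d = (S x₀ - d) + S (x - x₀) := by rw [map_sub]; abel
  have horth : ⟪S x₀ - d, S (x - x₀)⟫_𝕜 = 0 := by simpa using h₀ (x - x₀)
  rw [hsplit, norm_add_sq (𝕜 := 𝕜), horth, h₀.sq_norm_apply_sub h, map_sub, inner_sub_right,
    map_sub, ← inner_self_eq_norm_sq (𝕜 := 𝕜) (T x), map_zero]
  ring

theorem norm_apply_le (h₀ : SolvesNormalEq S T d 0 x₀) (h : SolvesNormalEq S T d β x)
    (hβ : 0 ≤ β) : ‖S x‖ ≤ ‖S x₀‖ := by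
  have hx := congrArg RCLike.re (h₀.inner_apply_sub h x)
  rw [map_sub, inner_sub_left, map_sub, inner_self_eq_norm_sq, map_neg,
    RCLike.re_ofReal_mul, inner_self_eq_norm_sq] at hx
  have hsq : 1 * ‖S x‖ ^ 2 ≤ ‖S x₀‖ * ‖S x‖ := by
    nlinarith [re_inner_le_norm (𝕜 := 𝕜) (S x₀) (S x), sq_nonneg ‖T x‖]
  simpa using mul_le_of_mul_sq_le_mul (norm_nonneg _) (norm_nonneg _) hsq

theorem norm_sub_le {C : ℝ} (hC : 0 < C) (hS : ∀ y, C * ‖y‖ ≤ ‖S y‖)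
    (h₀ : SolvesNormalEq S T d 0 x₀) (h : SolvesNormalEq S T d β x) (hβ : 0 ≤ β) :
    ‖x - x₀‖ ≤ β * (‖T‖ ^ 2 * ‖S x₀‖ / C ^ 3) := by
  have hx : C * ‖x‖ ≤ ‖S x₀‖ := (hS x).trans (h₀.norm_apply_le h hβ)
  have hcross : -RCLike.re ⟪T x, T (x - x₀)⟫_𝕜 ≤ ‖T‖ * ‖x‖ * (‖T‖ * ‖x - x₀‖) := by
    rw [← map_neg, ← inner_neg_left]
    refine (re_inner_le_norm _ _).trans ?_
    rw [norm_neg]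
    gcongr <;> exact T.le_opNorm _
  have hcoer : C ^ 2 * ‖x - x₀‖ ^ 2 ≤ ‖S (x - x₀)‖ ^ 2 := by
    rw [← mul_pow]; gcongr; exact hS _
  have hlin : C ^ 2 * ‖x - x₀‖ ≤ β * ‖T‖ ^ 2 * ‖x‖ :=
    mul_le_of_mul_sq_le_mul (norm_nonneg _) (by positivity) <| by
      rw [h₀.sq_norm_apply_sub h] at hcoer
      nlinarith [mul_le_mul_of_nonneg_left hcross hβ]
  rw [← mul_div_assoc, le_div_iff₀ (by positivity)]
  calc ‖x - x₀‖ * C ^ 3 = C * (C ^ 2 * ‖x - x₀‖) := by ring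
    _ ≤ C * (β * ‖T‖ ^ 2 * ‖x‖) := by gcongr
    _ = β * ‖T‖ ^ 2 * (C * ‖x‖) := by ring
    _ ≤ β * ‖T‖ ^ 2 * ‖S x₀‖ := by gcongr
    _ = β * (‖T‖ ^ 2 * ‖S x₀‖) := by ring

end SolvesNormalEq

end NormalEquation

/-- Let `U, V, D` be complex Hilbert spaces, `S : U → D` bounded and
coercive with `C_*‖u‖ ≤ ‖S u‖`, `T : U → V` bounded, `d ∈ D`; for `α ≥ 0` let `u_α` solve
`(S*S + α²T*T)u_α = S*d`, and set `J̃_α = (1/2)(‖S u_α − d‖² + α²‖T u_α‖²)`. Then there is a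
constant `C ≥ 0` such that for all `α ∈ (0, 1]`,
`|J̃_α − J̃_0 − (α²/2)‖T u_0‖²| ≤ C α⁴`. -/
theorem penalty_value_quadratic_expansion
    {U V D : Type*}
    [NormedAddCommGroup U] [InnerProductSpace ℂ U] [CompleteSpace U]
    [NormedAddCommGroup V] [InnerProductSpace ℂ V] [CompleteSpace V]
    [NormedAddCommGroup D] [InnerProductSpace ℂ D] [CompleteSpace D]
    (S : U →L[ℂ] D) (T : U →L[ℂ] V) (d : D)
    (Cstar : ℝ) (hCstar : 0 < Cstar) (hcoercive : ∀ x : U, Cstar * ‖x‖ ≤ ‖S x‖)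
    (u : ℝ → U)
    (hu : ∀ α : ℝ, (adjoint S) (S (u α)) + (α ^ 2) • (adjoint T) (T (u α)) =
      (adjoint S) d) :
    ∃ C : ℝ, 0 ≤ C ∧ ∀ α : ℝ, 0 < α → α ≤ 1 →
      |(1 / 2) * (‖S (u α) - d‖ ^ 2 + α ^ 2 * ‖T (u α)‖ ^ 2)
          - (1 / 2) * ‖S (u 0) - d‖ ^ 2
          - (α ^ 2 / 2) * ‖T (u 0)‖ ^ 2| ≤ C * α ^ 4 := by
  have hsol (α : ℝ) : SolvesNormalEq S T d (α ^ 2) (u α) :=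
    .of_adjoint (by rw [← RCLike.real_smul_eq_coe_smul]; exact hu α)
  have hsol₀ : SolvesNormalEq S T d 0 (u 0) := by simpa using hsol 0
  set M := ‖T‖ ^ 2 * ‖S (u 0)‖ / Cstar ^ 3
  refine ⟨‖T‖ * M * ‖T (u 0)‖ / 2, by positivity, fun α _ _ => ?_⟩
  have hdist : ‖u α - u 0‖ ≤ α ^ 2 * M :=
    hsol₀.norm_sub_le hCstar hcoercive (hsol α) (sq_nonneg α)
  have herr : (1 / 2) * (‖S (u α) - d‖ ^ 2 + α ^ 2 * ‖T (u α)‖ ^ 2)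
      - (1 / 2) * ‖S (u 0) - d‖ ^ 2 - (α ^ 2 / 2) * ‖T (u 0)‖ ^ 2
      = α ^ 2 / 2 * RCLike.re ⟪T (u α - u 0), T (u 0)⟫_ℂ := by
    rw [hsol₀.sq_norm_add_eq (hsol α), map_sub, inner_sub_left, map_sub,
      inner_self_eq_norm_sq]
    ring
  rw [herr, abs_mul, abs_of_nonneg (by positivity)]
  calc α ^ 2 / 2 * |RCLike.re ⟪T (u α - u 0), T (u 0)⟫_ℂ|
      ≤ α ^ 2 / 2 * (‖T‖ * ‖u α - u 0‖ * ‖T (u 0)‖) := by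
        gcongr
        exact (RCLike.abs_re_le_norm _).trans <| (norm_inner_le_norm _ _).trans <|
          by gcongr; exact T.le_opNorm _
    _ ≤ α ^ 2 / 2 * (‖T‖ * (α ^ 2 * M) * ‖T (u 0)‖) := by gcongr
    _ = ‖T‖ * M * ‖T (u 0)‖ / 2 * α ^ 4 := by ring
end

section
/- Let D be a complex Hilbert space, S : L²(ℝ) → D a bounded linear operator, σ > 0, and d ∈ D. Let u_σ = (S*S + σI)⁻¹S*d be the Tikhonov minimizer of u ↦ ‖Su − d‖² + σ‖u‖², and assume t·u_σ(t) ∈ L²(ℝ). For ε > 0 let T_ε be the bounded operator on L²(ℝ) given by (T_ε u)(t) = t·u(t)/√(1 + ε²t²), and for α > 0, ε > 0 define J̃(α, ε) = min over u ∈ L²(ℝ) of ( ‖Su − d‖² + σ‖u‖² + α²‖T_ε u‖² ), and J̃(0) = ‖Su_σ − d‖² + σ‖u_σ‖². Then lim_{ε → 0⁺} lim_{α → 0⁺} α^{−2}( J̃(α, ε) − J̃(0) ) = ‖t·u_σ(t)‖²_{L²}. -/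
open MeasureTheory ContinuousLinearMap Filter Topology

/-!
The normal equation makes the Tikhonov functional `F u = ‖S u - d‖² + σ‖u‖²` exactly quadratic
around `u_σ`: `F u = F u_σ + ‖S (u - u_σ)‖² + σ‖u - u_σ‖²`. Since `u ↦ ‖T_ε u‖` is
`ε⁻¹`-Lipschitz, adding `α²‖T_ε u‖²` moves the infimum of `F` by `α²‖T_ε u_σ‖² + O(α⁴)`: testing
`u_σ` gives the upper bound, completing the square in `‖u - u_σ‖` the lower one. This is the
inner limit. For the outer one, `T_ε u_σ = (1 + ε²t²)^(-1/2) · t u_σ` with a multiplier bounded by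
`1` and tending to `1` pointwise, so `T_ε u_σ → t u_σ` in `L²` by dominated convergence.
-/

/-- The smoothed multiplication-by-`t` operator `(T_ε u)(t) = t·u(t)/√(1 + ε²t²)`. -/
noncomputable def Teps (ε : ℝ) (u : ℝ → ℂ) : ℝ → ℂ :=
  fun t => ((t / Real.sqrt (1 + ε ^ 2 * t ^ 2) : ℝ) : ℂ) * u t

theorem sq_sub_two_mul_abs_mul_le_sq_of_abs_sub_le {a b δ : ℝ} (h : |b - a| ≤ δ) :
    a ^ 2 - 2 * |a| * δ ≤ b ^ 2 := by
  have hba : |a| - δ ≤ |b| := by linarith [abs_sub_abs_le_abs_sub a b, abs_sub_comm a b]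
  rcases le_total (|a|) (2 * δ) with hsmall | hlarge
  · have hδ : 0 ≤ δ := (abs_nonneg _).trans h
    nlinarith [mul_nonneg (abs_nonneg a) (by linarith : 0 ≤ 2 * δ - |a|), sq_abs a, sq_nonneg b]
  · nlinarith [sq_abs a, sq_abs b, abs_nonneg a, abs_nonneg (b - a)]

section Penalty

variable {X : Type*} [PseudoMetricSpace X] {F g : X → ℝ} {x₀ : X} {σ C : ℝ}

theorem add_sq_mul_sq_sub_le_add_sq_mul_sq (hσ : 0 < σ)
    (hF : ∀ x, F x₀ + σ * dist x x₀ ^ 2 ≤ F x) (hg : ∀ x, |g x - g x₀| ≤ C * dist x x₀)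
    (α : ℝ) (x : X) :
    F x₀ + α ^ 2 * g x₀ ^ 2 - α ^ 4 * (C * g x₀) ^ 2 / σ ≤ F x + α ^ 2 * g x ^ 2 := by
  set r := dist x x₀
  have hgx := sq_sub_two_mul_abs_mul_le_sq_of_abs_sub_le (hg x)
  -- completing the square in `r`
  have hsq : -(α ^ 4 * (C * g x₀) ^ 2 / σ) ≤ σ * r ^ 2 - 2 * α ^ 2 * |g x₀| * (C * r) := by
    have : 0 ≤ (σ * r - α ^ 2 * |g x₀| * C) ^ 2 / σ := by positivity
    have e : (σ * r - α ^ 2 * |g x₀| * C) ^ 2 / σ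
        = σ * r ^ 2 - 2 * α ^ 2 * |g x₀| * (C * r) + α ^ 4 * (C * g x₀) ^ 2 / σ := by
      field_simp
      rw [← sq_abs (g x₀)]
      ring
    linarith
  nlinarith [hF x, mul_le_mul_of_nonneg_left hgx (sq_nonneg α)]

theorem tendsto_iInf_add_sq_mul_sq_sub_div_sq (hσ : 0 < σ)
    (hF : ∀ x, F x₀ + σ * dist x x₀ ^ 2 ≤ F x) (hg : ∀ x, |g x - g x₀| ≤ C * dist x x₀) :
    Tendsto (fun α => ((⨅ x, F x + α ^ 2 * g x ^ 2) - F x₀) / α ^ 2) (𝓝[≠] 0)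
      (𝓝 (g x₀ ^ 2)) := by
  have : Nonempty X := ⟨x₀⟩
  have hbdd (α : ℝ) : BddBelow (Set.range fun x => F x + α ^ 2 * g x ^ 2) :=
    ⟨F x₀, Set.forall_mem_range.2 fun x => by
      nlinarith [hF x, sq_nonneg (dist x x₀), sq_nonneg (α * g x)]⟩
  have hlower : Tendsto (fun α : ℝ => g x₀ ^ 2 - α ^ 2 * ((C * g x₀) ^ 2 / σ)) (𝓝[≠] 0)
      (𝓝 (g x₀ ^ 2)) := by
    exact tendsto_nhdsWithin_of_tendsto_nhds (Continuous.tendsto' (by fun_prop) _ _ (by simp))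
  refine tendsto_of_tendsto_of_tendsto_of_le_of_le' hlower tendsto_const_nhds ?_ ?_ <;>
    filter_upwards [self_mem_nhdsWithin] with α (hα : α ≠ 0) <;>
    have hα2 : 0 < α ^ 2 := by positivity
  · rw [le_div_iff₀ hα2]
    have e : (g x₀ ^ 2 - α ^ 2 * ((C * g x₀) ^ 2 / σ)) * α ^ 2
        = α ^ 2 * g x₀ ^ 2 - α ^ 4 * (C * g x₀) ^ 2 / σ := by ring
    have := le_ciInf (add_sq_mul_sq_sub_le_add_sq_mul_sq hσ hF hg α)
    linarith
  · rw [div_le_iff₀ hα2]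
    have := ciInf_le (hbdd α) x₀
    linarith

end Penalty

section Tikhonov

variable {𝕜 H E : Type*} [RCLike 𝕜] [NormedAddCommGroup H] [InnerProductSpace 𝕜 H]
  [CompleteSpace H] [NormedAddCommGroup E] [InnerProductSpace 𝕜 E] [CompleteSpace E]

theorem tikhonov_eq_add_of_normal_eq {S : H →L[𝕜] E} {σ : ℝ} {d : E} {u₀ : H}
    (h : adjoint S (S u₀) + (σ : 𝕜) • u₀ = adjoint S d) (u : H) :
    ‖S u - d‖ ^ 2 + σ * ‖u‖ ^ 2
      = ‖S u₀ - d‖ ^ 2 + σ * ‖u₀‖ ^ 2 + (‖S (u - u₀)‖ ^ 2 + σ * ‖u - u₀‖ ^ 2) := by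
  set v := u - u₀
  -- the cross terms add up to `2 re ⟪S* (S u₀ - d) + σ u₀, v⟫ = 0`
  have hcross : RCLike.re (inner 𝕜 (S u₀ - d) (S v)) + σ * RCLike.re (inner 𝕜 u₀ v) = 0 := by
    have h0 : inner 𝕜 (adjoint S (S u₀) + (σ : 𝕜) • u₀ - adjoint S d) v = 0 := by
      rw [h, sub_self, inner_zero_left]
    rw [add_sub_right_comm, ← map_sub, inner_add_left, adjoint_inner_left,
      inner_smul_real_left] at h0
    simpa [RCLike.smul_re] using congrArg RCLike.re h0
  have hSu : S u - d = (S u₀ - d) + S v := by simp [v]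
  have hu : u = u₀ + v := by simp [v]
  rw [hSu, norm_add_sq (𝕜 := 𝕜), hu, norm_add_sq (𝕜 := 𝕜)]
  linear_combination 2 * hcross

end Tikhonov

theorem abs_toReal_eLpNorm_sub_le {α E : Type*} [MeasurableSpace α] {μ : Measure α}
    [NormedAddCommGroup E] {p : ENNReal} [Fact (1 ≤ p)] {f g : α → E} (hf : MemLp f p μ)
    (hg : MemLp g p μ) :
    |(eLpNorm f p μ).toReal - (eLpNorm g p μ).toReal| ≤ (eLpNorm (f - g) p μ).toReal := by
  rw [← Lp.norm_toLp f hf, ← Lp.norm_toLp g hg, ← Lp.norm_toLp _ (hf.sub hg), MemLp.toLp_sub]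
  exact abs_norm_sub_norm_le _ _

theorem tendsto_eLpNorm_smul_sub_self {ι α 𝕜 E : Type*} [MeasurableSpace α] {μ : Measure α}
    [NormedField 𝕜] [NormedAddCommGroup E] [NormedSpace 𝕜 E] {l : Filter ι}
    [l.IsCountablyGenerated] {p : ENNReal} (hp : p ≠ ⊤) {m : ι → α → 𝕜} {g : α → E}
    (hg : MemLp g p μ) (hm : ∀ i, AEStronglyMeasurable (m i) μ) (hm_le : ∀ i x, ‖m i x‖ ≤ 1)
    (hm_lim : ∀ᵐ x ∂μ, Tendsto (fun i => m i x) l (𝓝 1)) :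
    Tendsto (fun i => eLpNorm (m i • g - g) p μ) l (𝓝 0) := by
  rcases eq_or_ne p 0 with rfl | hp0
  · simpa using tendsto_const_nhds
  simp_rw [eLpNorm_eq_lintegral_rpow_enorm_toReal hp0 hp]
  have hpos : 0 < p.toReal := ENNReal.toReal_pos hp0 hp
  have hbound (i : ι) (x : α) : ‖(m i • g - g) x‖ₑ ^ p.toReal ≤ (2 * ‖g x‖ₑ) ^ p.toReal := by
    gcongr
    calc ‖(m i • g - g) x‖ₑ ≤ ‖m i x • g x‖ₑ + ‖g x‖ₑ := enorm_sub_le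
      _ ≤ ‖g x‖ₑ + ‖g x‖ₑ := by
          gcongr
          rw [enorm_smul, ← ofReal_norm]
          exact mul_le_of_le_one_left' (ENNReal.ofReal_le_one.2 (hm_le i x))
      _ = 2 * ‖g x‖ₑ := (two_mul _).symm
  have hfin : ∫⁻ x, (2 * ‖g x‖ₑ) ^ p.toReal ∂μ ≠ ⊤ := by
    simp_rw [ENNReal.mul_rpow_of_nonneg _ _ hpos.le]
    rw [lintegral_const_mul' _ _ (by simp)]
    exact ENNReal.mul_ne_top (by simp)
      (lintegral_rpow_enorm_lt_top_of_eLpNorm_lt_top hp0 hp hg.2).ne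
  have hlim : ∀ᵐ x ∂μ, Tendsto (fun i => ‖(m i • g - g) x‖ₑ ^ p.toReal) l (𝓝 0) := by
    filter_upwards [hm_lim] with x hx
    have := ((hx.smul_const (g x)).sub_const (g x)).enorm.ennrpow_const p.toReal
    simpa [ENNReal.zero_rpow_of_pos hpos] using this
  have hDCT := tendsto_lintegral_filter_of_dominated_convergence' _
    (Eventually.of_forall fun i => (((hm i).smul hg.1).sub hg.1).enorm.pow_const _)
    (Eventually.of_forall fun i => ae_of_all _ (hbound i)) hfin hlim
  simpa [ENNReal.zero_rpow_of_pos (inv_pos.2 hpos)] using hDCT.ennrpow_const (1 / p.toReal)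

theorem norm_inv_sqrt_one_add_sq_mul_sq_le_one (ε t : ℝ) :
    ‖(Real.sqrt (1 + ε ^ 2 * t ^ 2))⁻¹‖ ≤ 1 := by
  rw [norm_inv, Real.norm_of_nonneg (Real.sqrt_nonneg _)]
  exact inv_le_one_of_one_le₀ (Real.one_le_sqrt.2 (by nlinarith [sq_nonneg (ε * t)]))

section Teps

variable {ε : ℝ} {p : ENNReal} {μ : Measure ℝ} {f : ℝ → ℂ}

theorem Teps_sub (ε : ℝ) (f g : ℝ → ℂ) : Teps ε f - Teps ε g = Teps ε (f - g) := by
  ext t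
  simp [Teps, mul_sub]

theorem Teps_eq_smul (ε : ℝ) (f : ℝ → ℂ) :
    Teps ε f = (fun t => (Real.sqrt (1 + ε ^ 2 * t ^ 2))⁻¹) • fun t : ℝ => (t : ℂ) * f t := by
  ext t
  simp [Teps, div_eq_inv_mul, mul_assoc]

theorem norm_Teps_apply_le (hε : 0 < ε) (f : ℝ → ℂ) (t : ℝ) : ‖Teps ε f t‖ ≤ ε⁻¹ * ‖f t‖ := by
  have hs : 0 < Real.sqrt (1 + ε ^ 2 * t ^ 2) := Real.sqrt_pos.2 (by positivity)
  have hεt : ε * |t| ≤ Real.sqrt (1 + ε ^ 2 * t ^ 2) :=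
    Real.le_sqrt_of_sq_le (by nlinarith [sq_abs t])
  rw [Teps, norm_mul, Complex.norm_real, Real.norm_eq_abs, abs_div, abs_of_pos hs]
  gcongr
  rw [div_le_iff₀ hs, inv_mul_eq_div, le_div_iff₀' hε]
  exact hεt

theorem eLpNorm_Teps_le (hε : 0 < ε) (f : ℝ → ℂ) (p : ENNReal) (μ : Measure ℝ) :
    eLpNorm (Teps ε f) p μ ≤ ENNReal.ofReal ε⁻¹ * eLpNorm f p μ :=
  eLpNorm_le_mul_eLpNorm_of_ae_le_mul (ae_of_all _ (norm_Teps_apply_le hε f)) p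

theorem memLp_Teps (hε : 0 < ε) (hf : MemLp f p μ) : MemLp (Teps ε f) p μ :=
  hf.of_le_mul ((Measurable.aestronglyMeasurable (by fun_prop)).mul hf.1)
    (ae_of_all _ (norm_Teps_apply_le hε f))

theorem memLp_Teps_of_memLp_mul (ε : ℝ) (hf : MemLp (fun t : ℝ => (t : ℂ) * f t) p μ) :
    MemLp (Teps ε f) p μ := by
  rw [Teps_eq_smul]
  refine hf.of_le_mul (c := 1) ((Measurable.aestronglyMeasurable (by fun_prop)).smul hf.1)
    (ae_of_all _ fun t => ?_)
  rw [Pi.smul_apply', norm_smul]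
  exact mul_le_mul_of_nonneg_right (norm_inv_sqrt_one_add_sq_mul_sq_le_one ε t) (norm_nonneg _)

theorem abs_toReal_eLpNorm_Teps_sub_le [Fact (1 ≤ p)] (hε : 0 < ε) (u v : Lp ℂ p μ) :
    |(eLpNorm (Teps ε u) p μ).toReal - (eLpNorm (Teps ε v) p μ).toReal| ≤ ε⁻¹ * dist u v := by
  have huv : MemLp (⇑u - ⇑v) p μ := (Lp.memLp u).sub (Lp.memLp v)
  calc _ ≤ (eLpNorm (Teps ε u - Teps ε v) p μ).toReal :=
        abs_toReal_eLpNorm_sub_le (memLp_Teps hε (Lp.memLp u)) (memLp_Teps hε (Lp.memLp v))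
    _ ≤ (ENNReal.ofReal ε⁻¹ * eLpNorm (⇑u - ⇑v) p μ).toReal := by
        rw [Teps_sub]
        exact ENNReal.toReal_mono (ENNReal.mul_ne_top ENNReal.ofReal_ne_top huv.eLpNorm_ne_top)
          (eLpNorm_Teps_le hε _ p μ)
    _ = ε⁻¹ * dist u v := by
        rw [ENNReal.toReal_mul, ENNReal.toReal_ofReal (by positivity), Lp.dist_def]

theorem tendsto_eLpNorm_Teps_sub (hp : p ≠ ⊤) (hf : MemLp (fun t : ℝ => (t : ℂ) * f t) p μ) :
    Tendsto (fun ε => eLpNorm (Teps ε f - fun t : ℝ => (t : ℂ) * f t) p μ) (𝓝 0) (𝓝 0) := by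
  simp_rw [Teps_eq_smul]
  refine tendsto_eLpNorm_smul_sub_self hp hf
    (fun ε => Measurable.aestronglyMeasurable (by fun_prop)) norm_inv_sqrt_one_add_sq_mul_sq_le_one
    (ae_of_all _ fun t => ?_)
  have h := ((Continuous.tendsto (by fun_prop : Continuous fun ε : ℝ =>
    Real.sqrt (1 + ε ^ 2 * t ^ 2))) 0).inv₀ (by simp)
  simpa using h

theorem tendsto_toReal_eLpNorm_Teps [Fact (1 ≤ p)] (hp : p ≠ ⊤)
    (hf : MemLp (fun t : ℝ => (t : ℂ) * f t) p μ) :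
    Tendsto (fun ε => (eLpNorm (Teps ε f) p μ).toReal) (𝓝 0)
      (𝓝 (eLpNorm (fun t : ℝ => (t : ℂ) * f t) p μ).toReal) := by
  have hdiff := (ENNReal.tendsto_toReal ENNReal.zero_ne_top).comp (tendsto_eLpNorm_Teps_sub hp hf)
  refine tendsto_iff_norm_sub_tendsto_zero.2 (squeeze_zero_norm (fun ε => ?_) hdiff)
  rw [norm_norm, Real.norm_eq_abs]
  exact abs_toReal_eLpNorm_sub_le (memLp_Teps_of_memLp_mul ε hf) hf

end Teps

/-- Let `D` be a complex Hilbert space, `S : L²(ℝ) → D` bounded, `σ > 0`,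
`d ∈ D`, and let `u_σ = (S*S + σI)⁻¹S*d` be the Tikhonov minimizer; assume
`t·u_σ(t) ∈ L²(ℝ)`. For `α, ε > 0`, let
`J̃(α,ε) = inf_u (‖S u − d‖² + σ‖u‖² + α²‖T_ε u‖²)` and
`J̃(0) = ‖S u_σ − d‖² + σ‖u_σ‖²`. Then
`lim_{ε→0⁺} lim_{α→0⁺} α⁻²(J̃(α,ε) − J̃(0)) = ‖t·u_σ(t)‖²`. -/
theorem iterated_penalty_limit_is_time_spread
    {D : Type*} [NormedAddCommGroup D] [InnerProductSpace ℂ D] [CompleteSpace D]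
    (S : Lp ℂ 2 (volume : Measure ℝ) →L[ℂ] D)
    (σ : ℝ) (hσ : 0 < σ) (d : D)
    (uσ : Lp ℂ 2 (volume : Measure ℝ))
    (huσ : (adjoint S) (S uσ) + σ • uσ = (adjoint S) d)
    (huσt : MemLp (fun t : ℝ => (t : ℂ) * (uσ : ℝ → ℂ) t) 2 (volume : Measure ℝ)) :
    ∃ L : ℝ → ℝ,
      (∀ ε : ℝ, 0 < ε →
        Tendsto
          (fun α : ℝ =>
            ((⨅ u : Lp ℂ 2 (volume : Measure ℝ),
                (‖S u - d‖ ^ 2 + σ * ‖u‖ ^ 2 +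
                  α ^ 2 * ((eLpNorm (Teps ε (u : ℝ → ℂ)) 2 volume).toReal) ^ 2))
              - (‖S uσ - d‖ ^ 2 + σ * ‖uσ‖ ^ 2)) / α ^ 2)
          (nhdsWithin 0 (Set.Ioi 0)) (nhds (L ε))) ∧
      Tendsto L (nhdsWithin 0 (Set.Ioi 0))
        (nhds (((eLpNorm (fun t : ℝ => (t : ℂ) * (uσ : ℝ → ℂ) t) 2 volume).toReal) ^ 2)) := by
  have hF (u : Lp ℂ 2 (volume : Measure ℝ)) : ‖S uσ - d‖ ^ 2 + σ * ‖uσ‖ ^ 2 + σ * dist u uσ ^ 2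
      ≤ ‖S u - d‖ ^ 2 + σ * ‖u‖ ^ 2 := by
    rw [tikhonov_eq_add_of_normal_eq (by rwa [← RCLike.real_smul_eq_coe_smul]) u, dist_eq_norm]
    linarith [sq_nonneg ‖S (u - uσ)‖]
  refine ⟨fun ε => (eLpNorm (Teps ε uσ) 2 volume).toReal ^ 2, fun ε hε => ?_, ?_⟩
  · exact (tendsto_iInf_add_sq_mul_sq_sub_div_sq hσ hF fun u =>
      abs_toReal_eLpNorm_Teps_sub_le hε u uσ).mono_left (nhdsWithin_mono _ fun _ h => ne_of_gt h)
  · exact ((tendsto_toReal_eLpNorm_Teps ENNReal.ofNat_ne_top huσt).pow 2).mono_left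
      nhdsWithin_le_nhds
end
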